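/- arXiv:1805.10500 — 3 statements merged into one kernel-verified Lean document; each statement's English description precedes it below -/
import Mathlib

section
/- The CES production function Q(K,L) = F·(a·K^(−r) + (1−a)·L^(−r))^(−1/r) is concave on the open positive quadrant {(K,L) : K > 0, L > 0}, provided F > 0, 0 < a < 1, and r > −1 with r ≠ 0. -/
/-!
Write `q = -r`, so that `q < 1`, `q ≠ 0` and `ces F a r = F • M` with
`M(K, L) = (a K^q + (1 - a) L^q)^(1/q)` the weighted power mean. Since `t ↦ t^q / q` is concave
on `(0, ∞)` for every such `q` (its derivative `t^(q-1)` decreases), the superlevel set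
`{M ≥ 1} = {a K^q / q + (1 - a) L^q / q ≥ 1 / q}` is convex. A positive function that is
homogeneous of degree one and has a convex superlevel set `{f ≥ 1}` is superadditive: normalize
`x` and `y` to `x / f x`, `y / f y` on the level set and take their convex combination with
weights proportional to `f x`, `f y`, which is `(x + y) / (f x + f y)`. Homogeneity and
superadditivity together give concavity.
-/

noncomputable def ces (F a r K L : ℝ) : ℝ :=
  F * (a * K ^ (-r) + (1 - a) * L ^ (-r)) ^ (-1 / r)

open Real Set

section Homogeneous

variable {E : Type*} [AddCommGroup E] [Module ℝ E] {s : Set E} {f : E → ℝ}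

theorem add_le_of_homogeneous_of_convex_superlevel
    (hs_smul : ∀ x ∈ s, ∀ c : ℝ, 0 < c → c • x ∈ s)
    (hf : ∀ x ∈ s, ∀ c : ℝ, 0 < c → f (c • x) = c * f x) (hpos : ∀ x ∈ s, 0 < f x)
    (hlevel : Convex ℝ {x ∈ s | 1 ≤ f x}) {x y : E} (hx : x ∈ s) (hy : y ∈ s) :
    f x + f y ≤ f (x + y) := by
  set X := f x
  set Y := f y
  have hX : 0 < X := hpos x hx
  have hY : 0 < Y := hpos y hy
  have hnormalize : ∀ z ∈ s, (f z)⁻¹ • z ∈ {x ∈ s | 1 ≤ f x} := fun z hz =>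
    ⟨hs_smul z hz _ (inv_pos.2 (hpos z hz)),
      by rw [hf z hz _ (inv_pos.2 (hpos z hz)), inv_mul_cancel₀ (hpos z hz).ne']⟩
  have hmid := hlevel (hnormalize x hx) (hnormalize y hy) (a := X / (X + Y))
    (b := Y / (X + Y)) (by positivity) (by positivity) (by field_simp)
  have hcomb : (X / (X + Y)) • X⁻¹ • x + (Y / (X + Y)) • Y⁻¹ • y = (X + Y)⁻¹ • (x + y) := by
    rw [smul_smul, smul_smul, smul_add]
    congr 2 <;> field_simp
  rw [hcomb] at hmid
  calc X + Y ≤ (X + Y) * f ((X + Y)⁻¹ • (x + y)) :=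
        le_mul_of_one_le_right (by positivity) hmid.2
    _ = f ((X + Y) • (X + Y)⁻¹ • (x + y)) := (hf _ hmid.1 _ (by positivity)).symm
    _ = f (x + y) := by rw [smul_inv_smul₀ (by positivity)]

theorem concaveOn_of_homogeneous_of_superadditive (hconv : Convex ℝ s)
    (hs_smul : ∀ x ∈ s, ∀ c : ℝ, 0 < c → c • x ∈ s)
    (hf : ∀ x ∈ s, ∀ c : ℝ, 0 < c → f (c • x) = c * f x)
    (hadd : ∀ x ∈ s, ∀ y ∈ s, f x + f y ≤ f (x + y)) : ConcaveOn ℝ s f := by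
  refine ⟨hconv, fun x hx y hy a b ha hb hab => ?_⟩
  rcases ha.eq_or_lt with rfl | ha
  · simp [show b = 1 by linarith]
  rcases hb.eq_or_lt with rfl | hb
  · simp [show a = 1 by linarith]
  calc a • f x + b • f y = f (a • x) + f (b • y) := by rw [hf x hx a ha, hf y hy b hb]; rfl
    _ ≤ f (a • x + b • y) := hadd _ (hs_smul x hx a ha) _ (hs_smul y hy b hb)

end Homogeneous

theorem concaveOn_rpow_div {q : ℝ} (hq1 : q < 1) (hq0 : q ≠ 0) :
    ConcaveOn ℝ (Ioi 0) fun t : ℝ => t ^ q / q := by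
  have hderiv : deriv (fun t : ℝ => t ^ q / q) = fun t => t ^ (q - 1) := by
    ext t
    rw [deriv_div_const, Real.deriv_rpow_const, mul_div_cancel_left₀ _ hq0]
  refine AntitoneOn.concaveOn_of_deriv (convex_Ioi 0) ?_ ?_ ?_
  · exact (continuousOn_id.rpow_const fun t ht => Or.inl (ne_of_gt ht)).div_const q
  · rw [interior_Ioi]
    exact fun t ht => ((hasDerivAt_rpow_const (Or.inl (ne_of_gt ht))).div_const q)
      |>.differentiableAt.differentiableWithinAt
  · rw [hderiv, interior_Ioi]
    exact fun x hx y _ hxy => rpow_le_rpow_of_nonpos hx hxy (by linarith)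

theorem one_le_rpow_inv_iff {S q : ℝ} (hS : 0 < S) (hq : q ≠ 0) :
    1 ≤ S ^ q⁻¹ ↔ q⁻¹ ≤ S / q := by
  rcases hq.lt_or_gt with hq | hq
  · rw [le_rpow_inv_iff_of_neg one_pos hS hq, one_rpow, inv_eq_one_div,
      div_le_div_right_of_neg hq]
  · rw [le_rpow_inv_iff_of_pos zero_le_one hS.le hq, one_rpow, inv_eq_one_div,
      div_le_div_iff_of_pos_right hq]

noncomputable def powerMean (a q K L : ℝ) : ℝ := (a * K ^ q + (1 - a) * L ^ q) ^ q⁻¹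

section PowerMean

variable {a q : ℝ}

theorem powerMean_pos (ha0 : 0 < a) (ha1 : a < 1) {K L : ℝ} (hK : 0 < K) (hL : 0 < L) :
    0 < powerMean a q K L := by
  have : 0 < 1 - a := sub_pos.2 ha1
  unfold powerMean
  positivity

theorem powerMean_mul (ha0 : 0 ≤ a) (ha1 : a ≤ 1) (hq : q ≠ 0) {c K L : ℝ} (hc : 0 ≤ c)
    (hK : 0 ≤ K) (hL : 0 ≤ L) : powerMean a q (c * K) (c * L) = c * powerMean a q K L := by
  have : 0 ≤ 1 - a := sub_nonneg.2 ha1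
  unfold powerMean
  rw [mul_rpow hc hK, mul_rpow hc hL,
    show a * (c ^ q * K ^ q) + (1 - a) * (c ^ q * L ^ q) = c ^ q * (a * K ^ q + (1 - a) * L ^ q)
      by ring, mul_rpow (by positivity) (by positivity), rpow_rpow_inv hc hq]

theorem concaveOn_powerMean (ha0 : 0 < a) (ha1 : a < 1) (hq1 : q < 1) (hq0 : q ≠ 0) :
    ConcaveOn ℝ {p : ℝ × ℝ | 0 < p.1 ∧ 0 < p.2} fun p => powerMean a q p.1 p.2 := by
  have ha1' : 0 < 1 - a := sub_pos.2 ha1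
  set s := {p : ℝ × ℝ | 0 < p.1 ∧ 0 < p.2}
  have hconv : Convex ℝ s := (convex_Ioi 0).prod (convex_Ioi 0)
  have hs_smul : ∀ p ∈ s, ∀ c : ℝ, 0 < c → c • p ∈ s :=
    fun p hp c hc => ⟨mul_pos hc hp.1, mul_pos hc hp.2⟩
  have hhom : ∀ p ∈ s, ∀ c : ℝ, 0 < c →
      powerMean a q (c • p).1 (c • p).2 = c * powerMean a q p.1 p.2 :=
    fun p hp c hc => powerMean_mul ha0.le ha1.le hq0 hc.le hp.1.le hp.2.le
  have hpos : ∀ p ∈ s, 0 < powerMean a q p.1 p.2 :=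
    fun p hp => powerMean_pos ha0 ha1 hp.1 hp.2
  have hφ := concaveOn_rpow_div hq1 hq0
  have hΦ : ConcaveOn ℝ s fun p => a * (p.1 ^ q / q) + (1 - a) * (p.2 ^ q / q) :=
    (((hφ.comp_linearMap (LinearMap.fst ℝ ℝ ℝ)).subset (fun p hp => hp.1) hconv).smul
      ha0.le).add
    (((hφ.comp_linearMap (LinearMap.snd ℝ ℝ ℝ)).subset (fun p hp => hp.2) hconv).smul
      ha1'.le)
  have hlevel : {p ∈ s | 1 ≤ powerMean a q p.1 p.2} =
      {p ∈ s | q⁻¹ ≤ a * (p.1 ^ q / q) + (1 - a) * (p.2 ^ q / q)} := by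
    refine sep_ext_iff.2 fun p ⟨hp1, hp2⟩ => ?_
    rw [show a * (p.1 ^ q / q) + (1 - a) * (p.2 ^ q / q) = (a * p.1 ^ q + (1 - a) * p.2 ^ q) / q
      by ring]
    exact one_le_rpow_inv_iff (by positivity) hq0
  refine concaveOn_of_homogeneous_of_superadditive hconv hs_smul hhom fun x hx y hy =>
    add_le_of_homogeneous_of_convex_superlevel hs_smul hhom hpos ?_ hx hy
  rw [hlevel]
  exact hΦ.convex_ge _

end PowerMean

/-- the CES function is concave on the open positive quadrant. -/
theorem ces_concave (F a r : ℝ) (hF : 0 < F) (ha0 : 0 < a) (ha1 : a < 1)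
    (hr : -1 < r) (hr0 : r ≠ 0) :
    ConcaveOn ℝ {p : ℝ × ℝ | 0 < p.1 ∧ 0 < p.2} (fun p => ces F a r p.1 p.2) := by
  have hces : (fun p : ℝ × ℝ => ces F a r p.1 p.2) = F • fun p => powerMean a (-r) p.1 p.2 := by
    ext p
    simp only [ces, powerMean, Pi.smul_apply, smul_eq_mul, inv_neg, neg_div, one_div]
  rw [hces]
  exact (concaveOn_powerMean ha0 ha1 (by linarith) (neg_ne_zero.2 hr0)).smul hF.le
end

section
/- For the multicriteria problem with X = {(K,L) : K > 0, L > 0} and criteria f₁(K,L) = −p_K·K, f₂(K,L) = −p_L·L, f₃(K,L) = p_Q·F·(a·K^(−r) + (1−a)·L^(−r))^(−1/r), every feasible point is Pareto-optimal, i.e. P_f(X) = X. -/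
lemma inner_pos (a r : ℝ) (ha0 : 0 < a) (ha1 : a < 1) {K L : ℝ} (hK : 0 < K) (hL : 0 < L) :
    0 < a * K ^ (-r) + (1 - a) * L ^ (-r) := by
  have h1 : (0:ℝ) < K ^ (-r) := Real.rpow_pos_of_pos hK _
  have h2 : (0:ℝ) < L ^ (-r) := Real.rpow_pos_of_pos hL _
  have : 0 < 1 - a := by linarith
  positivity

/-- CES is strictly increasing in K. -/
lemma ces_lt_left (F a r : ℝ) (hF : 0 < F) (ha0 : 0 < a) (ha1 : a < 1)
    (hr0 : r ≠ 0) {K1 K2 L : ℝ} (hK1 : 0 < K1) (h : K1 < K2) (hL : 0 < L) :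
    ces F a r K1 L < ces F a r K2 L := by
  unfold ces
  have hA1 := inner_pos a r ha0 ha1 hK1 hL
  have hA2 := inner_pos a r ha0 ha1 (hK1.trans h) hL
  rcases hr0.lt_or_gt with hr | hr
  · -- r < 0: -r > 0, K^(-r) increasing; -1/r > 0
    have hk : K1 ^ (-r) < K2 ^ (-r) := Real.rpow_lt_rpow hK1.le h (by linarith)
    have hin : a * K1 ^ (-r) + (1 - a) * L ^ (-r) < a * K2 ^ (-r) + (1 - a) * L ^ (-r) := by
      nlinarith
    have he : (0:ℝ) < -1 / r := by
      rw [div_pos_iff]; right; constructor <;> linarith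
    exact mul_lt_mul_of_pos_left (Real.rpow_lt_rpow hA1.le hin he) hF
  · -- r > 0
    have hk : K2 ^ (-r) < K1 ^ (-r) := Real.rpow_lt_rpow_of_neg hK1 h (by linarith)
    have hin : a * K2 ^ (-r) + (1 - a) * L ^ (-r) < a * K1 ^ (-r) + (1 - a) * L ^ (-r) := by
      nlinarith
    have he : -1 / r < 0 := div_neg_of_neg_of_pos (by norm_num) hr
    exact mul_lt_mul_of_pos_left (Real.rpow_lt_rpow_of_neg hA2 hin he) hF

/-- CES is strictly increasing in L. -/
lemma ces_lt_right (F a r : ℝ) (hF : 0 < F) (ha0 : 0 < a) (ha1 : a < 1)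
    (hr0 : r ≠ 0) {K L1 L2 : ℝ} (hK : 0 < K) (hL1 : 0 < L1) (h : L1 < L2) :
    ces F a r K L1 < ces F a r K L2 := by
  unfold ces
  have hA1 := inner_pos a r ha0 ha1 hK hL1
  have hA2 := inner_pos a r ha0 ha1 hK (hL1.trans h)
  have ha' : (0:ℝ) < 1 - a := by linarith
  rcases hr0.lt_or_gt with hr | hr
  · have hk : L1 ^ (-r) < L2 ^ (-r) := Real.rpow_lt_rpow hL1.le h (by linarith)
    have hin : a * K ^ (-r) + (1 - a) * L1 ^ (-r) < a * K ^ (-r) + (1 - a) * L2 ^ (-r) := by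
      nlinarith
    have he : (0:ℝ) < -1 / r := by
      rw [div_pos_iff]; right; constructor <;> linarith
    exact mul_lt_mul_of_pos_left (Real.rpow_lt_rpow hA1.le hin he) hF
  · have hk : L2 ^ (-r) < L1 ^ (-r) := Real.rpow_lt_rpow_of_neg hL1 h (by linarith)
    have hin : a * K ^ (-r) + (1 - a) * L2 ^ (-r) < a * K ^ (-r) + (1 - a) * L1 ^ (-r) := by
      nlinarith
    have he : -1 / r < 0 := div_neg_of_neg_of_pos (by norm_num) hr
    exact mul_lt_mul_of_pos_left (Real.rpow_lt_rpow_of_neg hA2 hin he) hF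

/-- every feasible point of the economic multicriteria problem is
Pareto-optimal, i.e. `P_f(X) = X`. -/
theorem pareto_eq_X (pK pL pQ F a r : ℝ) (hpK : 0 < pK) (hpL : 0 < pL)
    (hpQ : 0 < pQ) (hF : 0 < F) (ha0 : 0 < a) (ha1 : a < 1)
    (hr : -1 < r) (hr0 : r ≠ 0) :
    let X : Set (ℝ × ℝ) := {p | 0 < p.1 ∧ 0 < p.2}
    let f : ℝ × ℝ → Fin 3 → ℝ := fun p =>
      ![-(pK * p.1), -(pL * p.2), pQ * ces F a r p.1 p.2]
    {x ∈ X | ¬ ∃ y ∈ X, (∀ i, f x i ≤ f y i) ∧ f y ≠ f x} = X := by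
  intro X f
  ext x
  simp only [Set.mem_setOf_eq, Set.mem_sep_iff, and_iff_left_iff_imp]
  intro hx
  rintro ⟨y, hy, hle, hne⟩
  have h0 := hle 0
  have h1 := hle 1
  have h2 := hle 2
  simp only [f, Matrix.cons_val_zero, Matrix.cons_val_one, Matrix.head_cons,
    Matrix.cons_val_two, Matrix.tail_cons] at h0 h1 h2
  have hy1 : y.1 ≤ x.1 := by nlinarith
  have hy2 : y.2 ≤ x.2 := by nlinarith
  have hces : ces F a r x.1 x.2 ≤ ces F a r y.1 y.2 := by nlinarith
  have hL : ces F a r y.1 y.2 ≤ ces F a r y.1 x.2 := by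
    rcases hy2.lt_or_eq with h | h
    · exact (ces_lt_right F a r hF ha0 ha1 hr0 hy.1 hy.2 h).le
    · rw [h]
  have hy1' : y.1 = x.1 := by
    rcases hy1.lt_or_eq with h | h
    · exact absurd (ces_lt_left F a r hF ha0 ha1 hr0 hy.1 h hx.2) (by linarith)
    · exact h
  have hy2' : y.2 = x.2 := by
    rcases hy2.lt_or_eq with h | h
    · have hc := ces_lt_right F a r hF ha0 ha1 hr0 hy.1 hy.2 h
      rw [hy1'] at hc hces
      linarith
    · exact h
  apply hne
  simp only [f, hy1', hy2']
end

section
/- Under the consistency conditions w₁⁽¹⁾/w₃⁽¹⁾ > w₁⁽²⁾/w₃⁽²⁾ and w₂⁽¹⁾/w₃⁽¹⁾ > w₂⁽²⁾/w₃⁽²⁾ (all wᵢ⁽ʲ⁾ > 0), the vectors y⁽¹⁾ = (w₁⁽¹⁾, w₂⁽¹⁾, −w₃⁽¹⁾) and y⁽²⁾ = (−w₁⁽²⁾, −w₂⁽²⁾, w₃⁽²⁾) in ℝ³ are linearly independent, and no positive linear combination α·y⁽¹⁾ + β·y⁽²⁾ with α, β > 0 equals the zero vector. -/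
/-- under the consistency conditions the vectors `y⁽¹⁾` and `y⁽²⁾`
are linearly independent and no positive combination of them is zero. -/
theorem consistency_vectors (w11 w21 w31 w12 w22 w32 : ℝ)
    (h11 : 0 < w11) (h21 : 0 < w21) (h31 : 0 < w31)
    (h12 : 0 < w12) (h22 : 0 < w22) (h32 : 0 < w32)
    (hc1 : w12 / w32 < w11 / w31) (hc2 : w22 / w32 < w21 / w31) :
    LinearIndependent ℝ ![(![w11, w21, -w31] : Fin 3 → ℝ), ![-w12, -w22, w32]] ∧
    ∀ α β : ℝ, 0 < α → 0 < β →
      α • (![w11, w21, -w31] : Fin 3 → ℝ) + β • ![-w12, -w22, w32] ≠ 0 := by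
  have key : w12 * w31 < w11 * w32 := by
    rw [div_lt_div_iff₀ h32 h31] at hc1; linarith
  constructor
  · rw [LinearIndependent.pair_iff]
    intro s t h
    have h0 := congrFun h 0
    have h2 := congrFun h 2
    simp [Matrix.cons_val_zero, Matrix.cons_val_one] at h0 h2
    constructor
    · nlinarith [mul_pos h31 h32]
    · nlinarith [mul_pos h31 h32]
  · intro α β hα hβ h
    have h0 := congrFun h 0
    have h2 := congrFun h 2
    simp at h0 h2
    nlinarith [mul_pos hα h32, mul_pos hβ h31]
end
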